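/- Let f : ℝ^d → ℝ and let {g_i}_{i∈I} be a family of functions such that for some points {x_i}_{i∈I} ⊂ ℝ^d one has f = g_i on the ball B(x_i, 20√d·L) for each i, and the support of f is contained in the union of the balls B(x_i, 10√d·L). Then the rescaled Hölder norm of f at scale L satisfies |f|_L ≤ 3 sup_{i∈I} |g_i|_L. -/

import Mathlib

open MeasureTheory Real

noncomputable section

/-- The rescaled Hölder norm `|f|_L = sup |f| + L^β · sup_{x≠y} |f x - f y| / |x-y|^β`. -/
def holNorm (d : ℕ) (β L : ℝ) (f : EuclideanSpace ℝ (Fin d) → ℝ) : ℝ :=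
  (⨆ x : EuclideanSpace ℝ (Fin d), |f x|) +
    L ^ β * ⨆ p : {q : EuclideanSpace ℝ (Fin d) × EuclideanSpace ℝ (Fin d) // q.1 ≠ q.2},
      |f p.val.1 - f p.val.2| / ‖p.val.1 - p.val.2‖ ^ β

/-!
Away from the support there is nothing to bound. A point `x` with `f x ≠ 0` lies in some ball
`B(x_i, 10√d·L)`, so the whole ball `B(x, L)` lies in `B(x_i, 20√d·L)`, where `f = g_i`: this
gives `|f x| ≤ |g_i|_L` and controls the Hölder quotient of `f` on pairs at distance `< L`.
For pairs at distance `≥ L` the factor `L^β` absorbs the denominator and the quotient is at most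
`|f x| + |f y| ≤ 2 sup_i |g_i|_L`.
-/

section HolderSeminorm

variable {E : Type*} [NormedAddCommGroup E]

def holderQuotient (β : ℝ) (f : E → ℝ) (x y : E) : ℝ :=
  |f x - f y| / ‖x - y‖ ^ β

def holderSeminorm (β : ℝ) (f : E → ℝ) : ℝ :=
  ⨆ p : {q : E × E // q.1 ≠ q.2}, holderQuotient β f p.val.1 p.val.2

variable {β L S : ℝ} {f : E → ℝ}

lemma holderQuotient_nonneg (x y : E) : 0 ≤ holderQuotient β f x y :=
  div_nonneg (abs_nonneg _) (rpow_nonneg (norm_nonneg _) β)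

lemma holderQuotient_comm (x y : E) : holderQuotient β f x y = holderQuotient β f y x := by
  rw [holderQuotient, holderQuotient, abs_sub_comm, norm_sub_rev]

lemma holderSeminorm_nonneg : 0 ≤ holderSeminorm β f :=
  Real.iSup_nonneg fun _ => holderQuotient_nonneg _ _

lemma holderQuotient_le_holderSeminorm {H : ℝ} (hH : ∀ x y, |f x - f y| ≤ H * ‖x - y‖ ^ β)
    {x y : E} (hxy : x ≠ y) : holderQuotient β f x y ≤ holderSeminorm β f := by
  refine le_ciSup (f := fun p : {q : E × E // q.1 ≠ q.2} => holderQuotient β f p.val.1 p.val.2)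
    ⟨H, ?_⟩ ⟨(x, y), hxy⟩
  rintro _ ⟨⟨⟨a, b⟩, hab⟩, rfl⟩
  exact (div_le_iff₀ (rpow_pos_of_pos (norm_pos_iff.mpr (sub_ne_zero.mpr hab)) β)).mpr (hH a b)

lemma rpow_mul_holderQuotient_le_of_le_norm (hL : 0 < L) (hβ : 0 ≤ β) {x y : E}
    (hxy : L ≤ ‖x - y‖) : L ^ β * holderQuotient β f x y ≤ |f x - f y| := by
  have hLβ : 0 < L ^ β := rpow_pos_of_pos hL β
  have hpow : L ^ β ≤ ‖x - y‖ ^ β := rpow_le_rpow hL.le hxy hβ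
  calc L ^ β * holderQuotient β f x y
      = |f x - f y| * (L ^ β / ‖x - y‖ ^ β) := by rw [holderQuotient]; ring
    _ ≤ |f x - f y| * 1 := by
        gcongr
        exact (div_le_one (hLβ.trans_le hpow)).mpr hpow
    _ = |f x - f y| := mul_one _

lemma rpow_mul_holderSeminorm_le (hL : 0 < L) (hβ : 0 ≤ β) (hsup : ∀ x, |f x| ≤ S)
    (hnear : ∀ x y, x ≠ y → ‖x - y‖ < L → f x ≠ 0 → L ^ β * holderQuotient β f x y ≤ 2 * S) :
    L ^ β * holderSeminorm β f ≤ 2 * S := by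
  have hLβ : 0 < L ^ β := rpow_pos_of_pos hL β
  have hS : 0 ≤ S := (abs_nonneg _).trans (hsup 0)
  have hpair : ∀ x y, x ≠ y → L ^ β * holderQuotient β f x y ≤ 2 * S := by
    intro x y hxy
    by_cases hfar : L ≤ ‖x - y‖
    · calc L ^ β * holderQuotient β f x y ≤ |f x - f y| :=
            rpow_mul_holderQuotient_le_of_le_norm hL hβ hfar
        _ ≤ |f x| + |f y| := abs_sub _ _
        _ ≤ 2 * S := by linarith [hsup x, hsup y]
    push Not at hfar
    by_cases hx : f x = 0
    · by_cases hy : f y = 0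
      · simp [holderQuotient, hx, hy, hS]
      · rw [holderQuotient_comm]
        exact hnear y x hxy.symm (by rwa [norm_sub_rev]) hy
    · exact hnear x y hxy hfar hx
  rw [← le_div_iff₀' hLβ]
  exact Real.iSup_le (fun p => (le_div_iff₀' hLβ).mpr (hpair _ _ p.2)) (by positivity)

end HolderSeminorm

section HolNorm

variable {d : ℕ} {β L S : ℝ} {f : EuclideanSpace ℝ (Fin d) → ℝ}

lemma holNorm_eq (f : EuclideanSpace ℝ (Fin d) → ℝ) :
    holNorm d β L f = (⨆ x, |f x|) + L ^ β * holderSeminorm β f :=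
  rfl

lemma holNorm_nonneg (hL : 0 ≤ L) (f : EuclideanSpace ℝ (Fin d) → ℝ) :
    0 ≤ holNorm d β L f := by
  rw [holNorm_eq]
  exact add_nonneg (Real.iSup_nonneg fun _ => abs_nonneg _)
    (mul_nonneg (rpow_nonneg hL β) holderSeminorm_nonneg)

lemma abs_le_holNorm (hL : 0 ≤ L) (hf : ∃ M, ∀ x, |f x| ≤ M) (x : EuclideanSpace ℝ (Fin d)) :
    |f x| ≤ holNorm d β L f := by
  obtain ⟨M, hM⟩ := hf
  rw [holNorm_eq]
  have hb : BddAbove (Set.range fun y => |f y|) := ⟨M, by rintro _ ⟨y, rfl⟩; exact hM y⟩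
  exact (le_ciSup hb x).trans
    (le_add_of_nonneg_right (mul_nonneg (rpow_nonneg hL β) holderSeminorm_nonneg))

lemma rpow_mul_holderQuotient_le_holNorm (hL : 0 ≤ L) {H : ℝ}
    (hH : ∀ x y, |f x - f y| ≤ H * ‖x - y‖ ^ β) {x y : EuclideanSpace ℝ (Fin d)} (hxy : x ≠ y) :
    L ^ β * holderQuotient β f x y ≤ holNorm d β L f := by
  rw [holNorm_eq]
  exact (mul_le_mul_of_nonneg_left (holderQuotient_le_holderSeminorm hH hxy)
    (rpow_nonneg hL β)).trans (le_add_of_nonneg_left (Real.iSup_nonneg fun _ => abs_nonneg _))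

lemma holNorm_le_three_mul (hL : 0 < L) (hβ : 0 ≤ β) (hsup : ∀ x, |f x| ≤ S)
    (hnear : ∀ x y, x ≠ y → ‖x - y‖ < L → f x ≠ 0 → L ^ β * holderQuotient β f x y ≤ 2 * S) :
    holNorm d β L f ≤ 3 * S := by
  rw [holNorm_eq]
  linarith [ciSup_le hsup, rpow_mul_holderSeminorm_le hL hβ hsup hnear]

end HolNorm

lemma ball_subset_ball_two_mul {E : Type*} [PseudoMetricSpace E] {x c : E} {r L : ℝ}
    (hx : x ∈ Metric.ball c r) (hLr : L ≤ r) : Metric.ball x L ⊆ Metric.ball c (2 * r) :=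
  Metric.ball_subset_ball' (by linarith [Metric.mem_ball.mp hx])

lemma le_mul_sqrt_natCast_mul {n : ℕ} {c L : ℝ} (hc : 1 ≤ c) (hL : 0 ≤ L) (hn : n ≠ 0) :
    L ≤ c * √n * L := by
  have hsqrt : 1 ≤ √(n : ℝ) :=
    one_le_sqrt.mpr (Nat.one_le_cast.mpr (Nat.one_le_iff_ne_zero.mpr hn))
  have hcsqrt : 1 ≤ c * √(n : ℝ) := by nlinarith
  nlinarith

theorem holNorm_extension_general (d : ℕ) (β L : ℝ) (hβ : 0 < β) (hL : 0 < L)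
    {I : Type*} (g : I → EuclideanSpace ℝ (Fin d) → ℝ) (xs : I → EuclideanSpace ℝ (Fin d))
    (f : EuclideanSpace ℝ (Fin d) → ℝ)
    (hgb : ∀ i, ∃ M, ∀ x, |g i x| ≤ M)
    (hgh : ∀ i, ∃ H, ∀ x y, |g i x - g i y| ≤ H * ‖x - y‖ ^ β)
    (hagree : ∀ i, ∀ y ∈ Metric.ball (xs i) (20 * Real.sqrt d * L), f y = g i y)
    (hsupp : Function.support f ⊆ ⋃ i, Metric.ball (xs i) (10 * Real.sqrt d * L))
    (hbdd : BddAbove (Set.range fun i => holNorm d β L (g i))) :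
    holNorm d β L f ≤ 3 * ⨆ i, holNorm d β L (g i) := by
  set S := ⨆ i, holNorm d β L (g i)
  have hgS : ∀ i, holNorm d β L (g i) ≤ S := le_ciSup hbdd
  have hS : 0 ≤ S := Real.iSup_nonneg fun i => holNorm_nonneg hL.le (g i)
  have hlocal : ∀ x, f x ≠ 0 → ∃ i, Set.EqOn f (g i) (Metric.ball x L) := by
    intro x hx
    obtain ⟨i, hxi⟩ := Set.mem_iUnion.mp (hsupp hx)
    have hd : d ≠ 0 := by rintro rfl; simp at hxi
    refine ⟨i, fun y hy => hagree i y ?_⟩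
    rw [show 20 * √d * L = 2 * (10 * √d * L) by ring]
    exact ball_subset_ball_two_mul hxi (le_mul_sqrt_natCast_mul (by norm_num) hL.le hd) hy
  refine holNorm_le_three_mul hL hβ.le (fun x => ?_) (fun x y hxy hxyL hx => ?_)
  · by_cases hx : f x = 0
    · simpa [hx] using hS
    obtain ⟨i, hi⟩ := hlocal x hx
    rw [hi (Metric.mem_ball_self hL)]
    exact (abs_le_holNorm hL.le (hgb i) x).trans (hgS i)
  · obtain ⟨i, hi⟩ := hlocal x hx
    obtain ⟨H, hH⟩ := hgh i
    have hy : y ∈ Metric.ball x L := by rwa [Metric.mem_ball, dist_eq_norm, norm_sub_rev]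
    have hfg : holderQuotient β f x y = holderQuotient β (g i) x y := by
      rw [holderQuotient, holderQuotient, hi (Metric.mem_ball_self hL), hi hy]
    rw [hfg]
    linarith [rpow_mul_holderQuotient_le_holNorm hL.le hH hxy (L := L), hgS i]

/-- a function agreeing with bounded Hölder functions `g i` on balls
`B(x_i, 20√d·L)` and supported in `⋃ B(x_i, 10√d·L)` satisfies
`|f|_L ≤ 3 sup_i |g i|_L`. -/
theorem holNorm_extension (d : ℕ) (β L : ℝ) (hβ : 0 < β) (hβ1 : β ≤ 1) (hL : 0 < L)
    {I : Type*} (g : I → EuclideanSpace ℝ (Fin d) → ℝ) (xs : I → EuclideanSpace ℝ (Fin d))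
    (f : EuclideanSpace ℝ (Fin d) → ℝ)
    (hgb : ∀ i, ∃ M, ∀ x, |g i x| ≤ M)
    (hgh : ∀ i, ∃ H, ∀ x y, |g i x - g i y| ≤ H * ‖x - y‖ ^ β)
    (hagree : ∀ i, ∀ y ∈ Metric.ball (xs i) (20 * Real.sqrt d * L), f y = g i y)
    (hsupp : Function.support f ⊆ ⋃ i, Metric.ball (xs i) (10 * Real.sqrt d * L))
    (hbdd : BddAbove (Set.range fun i => holNorm d β L (g i))) :
    holNorm d β L f ≤ 3 * ⨆ i, holNorm d β L (g i) :=
  holNorm_extension_general d β L hβ hL g xs f hgb hgh hagree hsupp hbdd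

end
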